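/- arXiv:1602.00753 — 2 statements merged into one kernel-verified Lean document; each statement's English description precedes it below -/
import Mathlib

section
/- Let G = (V, E) be a finite weighted simple graph on n vertices whose edge costs all lie in the interval [m, M] with 0 < m ≤ M. Let H be a subgraph of G whose edge set is the union of the edge sets of k pairwise edge-disjoint spanning trees of V, and let OPT be any k-edge-connected spanning subgraph of G (with k ≥ 1 and n ≥ 2). Then cost(H) ≤ (2M/m) · cost(OPT), where the cost of a subgraph is the sum of the costs of its edges. -/
open Finset

/-- Let `G` be a finite weighted simple graph on `n` vertices whose edge
costs all lie in `[m, M]` with `0 < m ≤ M`.  Let `H ≤ G` be a subgraph whose edge set is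
the union of the edge sets of `k` pairwise edge-disjoint spanning trees, and let `OPT ≤ G`
be any `k`-edge-connected spanning subgraph (`k ≥ 1`, `n ≥ 2`).  Then
`cost(H) ≤ (2M/m) · cost(OPT)`. -/
theorem cost_union_spanning_trees_le_cost_k_edge_connected
    {V : Type*} [Fintype V] [DecidableEq V]
    (G H OPT : SimpleGraph V) [DecidableRel H.Adj] [DecidableRel OPT.Adj]
    (cost : Sym2 V → ℝ) (m M : ℝ) (k : ℕ)
    (hk : 1 ≤ k) (hn : 2 ≤ Fintype.card V)
    (hm : 0 < m) (hmM : m ≤ M)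
    (hcost : ∀ e ∈ G.edgeSet, m ≤ cost e ∧ cost e ≤ M)
    (hHG : H ≤ G) (hOPTG : OPT ≤ G)
    (T : Fin k → SimpleGraph V)
    (htree : ∀ i, (T i).IsTree)
    (hdisj : ∀ i j, i ≠ j → Disjoint (T i).edgeSet (T j).edgeSet)
    (hH : H.edgeSet = ⋃ i, (T i).edgeSet)
    (hOPT : ∀ F : Finset (Sym2 V), ↑F ⊆ OPT.edgeSet → F.card < k →
      (OPT.deleteEdges (↑F : Set (Sym2 V))).Connected) :
    ∑ e ∈ H.edgeFinset, cost e ≤ (2 * M / m) * ∑ e ∈ OPT.edgeFinset, cost e := by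
  classical
  set n := Fintype.card V with hn'
  have hTdec : ∀ i, DecidableRel (T i).Adj := fun i => Classical.decRel _
  have hHfin : H.edgeFinset = Finset.univ.biUnion (fun i : Fin k => (T i).edgeFinset) := by
    ext e
    simp [SimpleGraph.mem_edgeFinset, hH, Set.mem_iUnion]
  have hd : ∀ i ∈ (univ : Finset (Fin k)), ∀ j ∈ (univ : Finset (Fin k)), i ≠ j →
      Disjoint (T i).edgeFinset (T j).edgeFinset := by
    intro i _ j _ hij
    rw [← Finset.disjoint_coe]
    simpa [SimpleGraph.coe_edgeFinset] using hdisj i j hij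
  have hHcard : H.edgeFinset.card = k * (n - 1) := by
    have hT1 : ∀ i, (T i).edgeFinset.card = n - 1 := fun i => by
      have := (htree i).card_edgeFinset; omega
    rw [hHfin, Finset.card_biUnion hd, Finset.sum_congr rfl (fun i _ => hT1 i),
      Finset.sum_const, smul_eq_mul, Finset.card_univ, Fintype.card_fin]
  -- cost H bound
  have hA : ∑ e ∈ H.edgeFinset, cost e ≤ (k * (n - 1) : ℕ) * M := by
    rw [← hHcard]
    have := Finset.sum_le_card_nsmul H.edgeFinset cost M (fun e he => by
      exact (hcost e (SimpleGraph.edgeSet_mono hHG (SimpleGraph.mem_edgeFinset.mp he))).2)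
    simpa [nsmul_eq_mul] using this
  -- degree bound
  have hdeg : ∀ v : V, k ≤ OPT.degree v := by
    intro v
    by_contra hlt
    push_neg at hlt
    have hF : ((OPT.incidenceFinset v : Finset (Sym2 V)) : Set (Sym2 V)) ⊆ OPT.edgeSet := by
      intro e he
      rw [Finset.mem_coe, SimpleGraph.mem_incidenceFinset] at he
      exact he.1
    have hcard : (OPT.incidenceFinset v).card < k := by
      rwa [SimpleGraph.card_incidenceFinset_eq_degree]
    have hconn := hOPT _ hF hcard
    obtain ⟨u, hu⟩ := Fintype.exists_ne_of_one_lt_card (by omega) v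
    obtain ⟨w⟩ := hconn v u
    cases w with
    | nil => exact hu rfl
    | cons h p =>
      rw [SimpleGraph.deleteEdges_adj] at h
      exact h.2 (by
        rw [Finset.mem_coe, SimpleGraph.mem_incidenceFinset]
        exact ⟨h.1, Sym2.mem_mk_left _ _⟩)
  -- edge count of OPT
  have hE : k * n ≤ 2 * OPT.edgeFinset.card := by
    have h1 : ∑ v : V, OPT.degree v = 2 * OPT.edgeFinset.card :=
      SimpleGraph.sum_degrees_eq_twice_card_edges OPT
    calc k * n = ∑ _v : V, k := by rw [Finset.sum_const, smul_eq_mul, Finset.card_univ]; ring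
    _ ≤ ∑ v : V, OPT.degree v := Finset.sum_le_sum (fun v _ => hdeg v)
    _ = 2 * OPT.edgeFinset.card := h1
  -- cost OPT lower bound
  have hB : (OPT.edgeFinset.card : ℝ) * m ≤ ∑ e ∈ OPT.edgeFinset, cost e := by
    have := Finset.card_nsmul_le_sum OPT.edgeFinset cost m (fun e he => by
      exact (hcost e (SimpleGraph.edgeSet_mono hOPTG (SimpleGraph.mem_edgeFinset.mp he))).1)
    simpa [nsmul_eq_mul, mul_comm] using this
  -- finish
  have hM : (0:ℝ) < M := lt_of_lt_of_le hm hmM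
  rw [div_mul_eq_mul_div, le_div_iff₀ hm]
  have hc1 : ((k * (n-1) : ℕ) : ℝ) ≤ ((k * n : ℕ) : ℝ) := by
    exact_mod_cast Nat.mul_le_mul_left k (Nat.sub_le n 1)
  have hc2 : ((k * n : ℕ) : ℝ) ≤ 2 * (OPT.edgeFinset.card : ℝ) := by exact_mod_cast hE
  nlinarith [mul_le_mul_of_nonneg_right hA hm.le, mul_le_mul_of_nonneg_left hB hM.le,
    mul_le_mul_of_nonneg_right hc1 (mul_nonneg hM.le hm.le),
    mul_le_mul_of_nonneg_right hc2 (mul_nonneg hM.le hm.le)]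
end

section
/- A finite simple graph G on at least two vertices has at least k pairwise edge-disjoint paths between every two distinct vertices if and only if G is k-edge-connected. -/
/-!
Max-flow min-cut, with flows encoded as sets of darts using no edge in both directions.
If `u` and `v` survive the deletion of any `k` edges, a flow of value `k` from `u` to `v`
extends to one of value `k + 1`: otherwise the vertices reachable from `u` through darts not
yet in the flow form a cut whose `k` edges all carry flow, and deleting them separates `u`
from `v`. A flow of value `k` then splits into `k` dart-disjoint paths, found one at a time
by the same cut argument, and these are edge-disjoint because the flow is antisymmetric.
Conversely, fewer than `k` deleted edges miss one of `k` edge-disjoint paths.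
-/

open Finset

namespace SimpleGraph

variable {V : Type*} {G : SimpleGraph V} {u v : V} {k : ℕ}

lemma exists_cut_of_not_exists_walk [Fintype V] {p : G.Dart → Prop}
    (h : ¬∃ W : G.Walk u v, ∀ d ∈ W.darts, p d) :
    ∃ S : Finset V, u ∈ S ∧ v ∉ S ∧ ∀ d : G.Dart, d.fst ∈ S → d.snd ∉ S → ¬p d := by
  classical
  refine ⟨({x | ∃ W : G.Walk u x, ∀ d ∈ W.darts, p d} : Finset V), ?_⟩
  simp only [mem_filter, mem_univ, true_and, not_exists]
  refine ⟨⟨.nil, by simp⟩, fun W hW ↦ h ⟨W, hW⟩, ?_⟩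
  rintro d ⟨W, hW⟩ hd hpd
  refine hd (W.concat d.adj) fun e he ↦ ?_
  rw [Walk.darts_concat, List.concat_eq_append, List.mem_append, List.mem_singleton] at he
  rcases he with he | rfl
  exacts [hW e he, hpd]

lemma Walk.edges_disjoint_of_darts_disjoint {D : Set G.Dart} (hanti : ∀ d ∈ D, d.symm ∉ D)
    {a b c e : V} {W₁ : G.Walk a b} {W₂ : G.Walk c e} (h₁ : ∀ d ∈ W₁.darts, d ∈ D)
    (h₂ : ∀ d ∈ W₂.darts, d ∈ D) (h : ∀ d ∈ W₁.darts, d ∉ W₂.darts) :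
    ∀ s ∈ W₁.edges, s ∉ W₂.edges := by
  simp only [Walk.edges, List.mem_map]
  rintro _ ⟨d₁, hd₁, rfl⟩ ⟨d₂, hd₂, hd⟩
  rcases (dart_edge_eq_iff d₂ d₁).1 hd with rfl | rfl
  exacts [h _ hd₁ hd₂, hanti _ (h₁ _ hd₁) (h₂ _ hd₂)]

section Flow

variable [DecidableEq V]

/-- A finite set of darts is read as an integral flow carrying one unit along each dart. -/
def netFlow (D : Finset G.Dart) (x : V) : ℤ := #{d ∈ D | d.fst = x} - #{d ∈ D | d.snd = x}

@[simp] lemma netFlow_empty : netFlow (∅ : Finset G.Dart) = 0 := by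
  ext; simp [netFlow]

lemma netFlow_union {A B : Finset G.Dart} (h : Disjoint A B) :
    netFlow (A ∪ B) = netFlow A + netFlow B := by
  ext x
  simp only [netFlow, filter_union, Pi.add_apply,
    card_union_of_disjoint (disjoint_filter_filter h)]
  push_cast; ring

lemma netFlow_singleton (d : G.Dart) :
    netFlow {d} = Pi.single d.fst 1 - Pi.single d.snd 1 := by
  ext x
  simp only [netFlow, filter_singleton, Pi.sub_apply, Pi.single_apply, eq_comm (a := x)]
  split_ifs <;> simp

lemma netFlow_symm_singleton (d : G.Dart) : netFlow {d.symm} = -netFlow {d} := by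
  simp only [netFlow_singleton, Dart.symm_toProd, Prod.fst_swap, Prod.snd_swap]
  abel

lemma netFlow_insert {D : Finset G.Dart} {d : G.Dart} (hd : d ∉ D) :
    netFlow (insert d D) = netFlow D + netFlow {d} := by
  rw [insert_eq, netFlow_union (disjoint_singleton_left.2 hd), add_comm]

lemma netFlow_sdiff {S D : Finset G.Dart} (h : S ⊆ D) :
    netFlow (D \ S) = netFlow D - netFlow S := by
  rw [eq_sub_iff_add_eq, ← netFlow_union sdiff_disjoint, sdiff_union_of_subset h]

lemma netFlow_darts_toFinset {W : G.Walk u v} (hW : W.IsPath) :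
    netFlow W.darts.toFinset = Pi.single u 1 - Pi.single v 1 := by
  induction W with
  | nil => simp
  | @cons a b _ h W ih =>
    rw [Walk.cons_isPath_iff] at hW
    have hd : (⟨(a, b), h⟩ : G.Dart) ∉ W.darts :=
      fun hd ↦ hW.2 (W.dart_fst_mem_support_of_mem_darts hd)
    rw [Walk.darts_cons, List.toFinset_cons, netFlow_insert (by simpa using hd), ih hW.1,
      netFlow_singleton]
    abel

lemma sum_netFlow (D : Finset G.Dart) (S : Finset V) :
    ∑ x ∈ S, netFlow D x =
      #{d ∈ D | d.fst ∈ S ∧ d.snd ∉ S} - #{d ∈ D | d.fst ∉ S ∧ d.snd ∈ S} := by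
  have fiber (f : G.Dart → V) : ∑ x ∈ S, (#{d ∈ D | f d = x} : ℤ) = #{d ∈ D | f d ∈ S} := by
    rw [card_eq_sum_card_fiberwise (s := {d ∈ D | f d ∈ S}) (t := S)
      fun d hd ↦ (mem_filter.1 hd).2]
    push_cast
    refine sum_congr rfl fun x hx ↦ ?_
    rw [filter_filter]
    congr 2
    ext d
    simp only [mem_filter]
    grind
  have split (p q : G.Dart → Prop) [DecidablePred p] [DecidablePred q] :
      #{d ∈ D | p d} = #{d ∈ D | p d ∧ q d} + #{d ∈ D | p d ∧ ¬ q d} := by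
    rw [← card_filter_add_card_filter_not (s := {d ∈ D | p d}) q, filter_filter, filter_filter]
  simp only [netFlow, sum_sub_distrib, fiber]
  rw [split (fun d ↦ d.fst ∈ S) (fun d ↦ d.snd ∈ S),
    split (fun d ↦ d.snd ∈ S) (fun d ↦ d.fst ∈ S)]
  simp only [and_comm]
  push_cast; ring

lemma exists_walk_darts_mem [Fintype V] {D : Finset G.Dart}
    (hD : netFlow D = Pi.single u (k : ℤ) - Pi.single v (k : ℤ)) (hk : k ≠ 0) :
    ∃ W : G.Walk u v, ∀ d ∈ W.darts, d ∈ D := by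
  by_contra h
  obtain ⟨S, hu, hv, hS⟩ := exists_cut_of_not_exists_walk h
  have hout : #{d ∈ D | d.fst ∈ S ∧ d.snd ∉ S} = 0 :=
    card_eq_zero.2 <| filter_eq_empty_iff.2 fun d hd hS' ↦ hS d hS'.1 hS'.2 hd
  have := sum_netFlow D S
  simp only [hD, Pi.sub_apply, sum_sub_distrib, sum_pi_single', hu, hv, hout, if_true,
    if_false] at this
  omega

lemma exists_walk_darts_notMem [Fintype V] {D : Finset G.Dart}
    (hanti : ∀ d ∈ D, d.symm ∉ D) (hD : netFlow D = Pi.single u (k : ℤ) - Pi.single v (k : ℤ))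
    (h : G.IsEdgeReachable (k + 1) u v) :
    ∃ W : G.Walk u v, ∀ d ∈ W.darts, d ∉ D := by
  by_contra hW
  obtain ⟨S, hu, hv, hS⟩ := exists_cut_of_not_exists_walk hW
  simp only [not_not] at hS
  have hin : #{d ∈ D | d.fst ∉ S ∧ d.snd ∈ S} = 0 :=
    card_eq_zero.2 <| filter_eq_empty_iff.2 fun d hd hS' ↦
      hanti _ (hS d.symm (by simpa using hS'.2) (by simpa using hS'.1)) (by simpa using hd)
  -- every edge of the cut carries one unit of flow out of `S`, so the cut has only `k` edges
  have hout := sum_netFlow D S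
  simp only [hD, Pi.sub_apply, sum_sub_distrib, sum_pi_single', hu, hv, hin, if_true,
    if_false] at hout
  have hF : (({d ∈ D | d.fst ∈ S ∧ d.snd ∉ S}.image Dart.edge : Finset (Sym2 V)) :
      Set (Sym2 V)).encard < (k + 1 : ℕ) := by
    rw [Set.encard_coe_eq_coe_finsetCard, Nat.cast_lt]
    exact card_image_le.trans_lt (by omega)
  obtain ⟨W⟩ := h hF
  obtain ⟨d, -, hdS, hdS'⟩ := W.exists_boundary_dart S hu hv
  have hd := deleteEdges_adj.1 d.adj
  exact hd.2 <| mem_image.2 ⟨⟨d.toProd, hd.1⟩, mem_filter.2 ⟨hS _ hdS hdS', hdS, hdS'⟩, rfl⟩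

lemma exists_augment_dart {D : Finset G.Dart} (hanti : ∀ d ∈ D, d.symm ∉ D) {d : G.Dart}
    (hd : d ∉ D) :
    ∃ D' ⊆ insert d D, (∀ e ∈ D', e.symm ∉ D') ∧ netFlow D' = netFlow D + netFlow {d} := by
  by_cases hsymm : d.symm ∈ D
  · refine ⟨D.erase d.symm, (erase_subset _ _).trans (subset_insert _ _),
      fun e he he' ↦ hanti e (mem_of_mem_erase he) (mem_of_mem_erase he'), ?_⟩
    rw [← sdiff_singleton_eq_erase, netFlow_sdiff (singleton_subset_iff.2 hsymm),
      netFlow_symm_singleton, sub_neg_eq_add]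
  refine ⟨insert d D, subset_rfl, fun e he he' ↦ ?_, netFlow_insert hd⟩
  rcases mem_insert.1 he with rfl | he <;> rcases mem_insert.1 he' with he' | he'
  exacts [e.symm_ne he', hsymm he', hsymm (by rw [← he', Dart.symm_symm]; exact he),
    hanti e he he']

lemma exists_augment_path {D : Finset G.Dart} (hanti : ∀ d ∈ D, d.symm ∉ D) {W : G.Walk u v}
    (hW : W.IsPath) (hres : ∀ d ∈ W.darts, d ∉ D) :
    ∃ D' : Finset G.Dart, (∀ d ∈ D', d.symm ∉ D') ∧
      netFlow D' = netFlow D + (Pi.single u 1 - Pi.single v 1) := by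
  induction W generalizing D with
  | nil => exact ⟨D, hanti, by simp⟩
  | @cons a b _ h W ih =>
    rw [Walk.cons_isPath_iff] at hW
    rw [Walk.darts_cons] at hres
    obtain ⟨D₁, hD₁, hanti₁, hnet₁⟩ := exists_augment_dart hanti (hres _ List.mem_cons_self)
    have hres₁ : ∀ e ∈ W.darts, e ∉ D₁ := fun e he he₁ ↦ by
      rcases mem_insert.1 (hD₁ he₁) with rfl | he₁
      exacts [hW.2 (W.dart_fst_mem_support_of_mem_darts he),
        hres e (List.mem_cons_of_mem _ he) he₁]
    obtain ⟨D', hanti', hnet'⟩ := ih hanti₁ hW.1 hres₁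
    refine ⟨D', hanti', ?_⟩
    rw [hnet', hnet₁, netFlow_singleton]
    abel

lemma exists_flow_of_isEdgeReachable [Fintype V] (h : G.IsEdgeReachable k u v) :
    ∃ D : Finset G.Dart, (∀ d ∈ D, d.symm ∉ D) ∧
      netFlow D = Pi.single u (k : ℤ) - Pi.single v (k : ℤ) := by
  induction k with
  | zero => exact ⟨∅, by simp, by simp⟩
  | succ k ih =>
    obtain ⟨D, hanti, hD⟩ := ih (h.anti k.le_succ)
    obtain ⟨W, hW⟩ := exists_walk_darts_notMem hanti hD h
    obtain ⟨D', hanti', hD'⟩ := exists_augment_path hanti W.bypass_isPath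
      fun d hd ↦ hW d (W.darts_bypass_subset_darts hd)
    refine ⟨D', hanti', ?_⟩
    rw [hD', hD]
    push_cast
    simp only [Pi.single_add]
    abel

lemma exists_darts_disjoint_paths [Fintype V] {D : Finset G.Dart}
    (hD : netFlow D = Pi.single u (k : ℤ) - Pi.single v (k : ℤ)) :
    ∃ P : Fin k → G.Walk u v, (∀ i, (P i).IsPath) ∧ (∀ i, ∀ d ∈ (P i).darts, d ∈ D) ∧
      ∀ i j, i ≠ j → ∀ d ∈ (P i).darts, d ∉ (P j).darts := by
  induction k generalizing D with
  | zero => exact ⟨Fin.elim0, fun i ↦ i.elim0, fun i ↦ i.elim0, fun i ↦ i.elim0⟩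
  | succ k ih =>
    obtain ⟨W, hW⟩ := exists_walk_darts_mem hD k.succ_ne_zero
    have hWD : W.bypass.darts.toFinset ⊆ D :=
      fun d hd ↦ hW d (W.darts_bypass_subset_darts (List.mem_toFinset.1 hd))
    have hD' : netFlow (D \ W.bypass.darts.toFinset) =
        Pi.single u (k : ℤ) - Pi.single v (k : ℤ) := by
      rw [netFlow_sdiff hWD, netFlow_darts_toFinset W.bypass_isPath, hD]
      push_cast
      simp only [Pi.single_add]
      abel
    obtain ⟨P, hPpath, hPD, hPdisj⟩ := ih hD'
    have hPW : ∀ i, ∀ d ∈ (P i).darts, d ∉ W.bypass.darts := fun i d hd hdW ↦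
      (mem_sdiff.1 (hPD i d hd)).2 (List.mem_toFinset.2 hdW)
    refine ⟨Fin.cons W.bypass P, Fin.cases W.bypass_isPath hPpath,
      Fin.cases (fun d hd ↦ hWD (List.mem_toFinset.2 hd))
        fun i d hd ↦ (mem_sdiff.1 (hPD i d hd)).1, ?_⟩
    intro i j hij
    cases i using Fin.cases <;> cases j using Fin.cases
    · exact absurd rfl hij
    · exact fun d hd hdj ↦ hPW _ d hdj hd
    · exact hPW _
    · exact hPdisj _ _ (fun h ↦ hij (congrArg Fin.succ h))

end Flow

lemma isEdgeReachable_of_edges_disjoint (P : Fin k → G.Walk u v)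
    (hP : ∀ i j, i ≠ j → ∀ e ∈ (P i).edges, e ∉ (P j).edges) : G.IsEdgeReachable k u v := by
  intro s hs
  by_contra h
  have hmeet : ∀ i, ∃ e ∈ (P i).edges, e ∈ s := fun i ↦ by
    by_contra! hi
    exact h ⟨(P i).toDeleteEdges s hi⟩
  choose f hfP hfs using hmeet
  have hf : f.Injective := fun i j hij ↦ by
    by_contra hne
    exact hP i j hne _ (hfP i) (hij ▸ hfP j)
  have := hf.encard_range.trans (Set.encard_le_encard (Set.range_subset_iff.2 hfs))
  simp only [ENat.card_eq_coe_fintype_card, Fintype.card_fin] at this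
  exact hs.not_ge this

theorem isEdgeReachable_iff_exists_edges_disjoint_paths [Fintype V] :
    G.IsEdgeReachable k u v ↔ ∃ P : Fin k → G.Walk u v, (∀ i, (P i).IsPath) ∧
      ∀ i j, i ≠ j → ∀ e ∈ (P i).edges, e ∉ (P j).edges := by
  classical
  refine ⟨fun h ↦ ?_, fun ⟨P, _, hP⟩ ↦ isEdgeReachable_of_edges_disjoint P hP⟩
  obtain ⟨D, hanti, hD⟩ := exists_flow_of_isEdgeReachable h
  obtain ⟨P, hPpath, hPD, hPdisj⟩ := exists_darts_disjoint_paths hD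
  exact ⟨P, hPpath, fun i j hij ↦
    Walk.edges_disjoint_of_darts_disjoint hanti (hPD i) (hPD j) (hPdisj i j hij)⟩

lemma isEdgeConnected_iff_forall_connected_deleteEdges [Nonempty V] :
    G.IsEdgeConnected k ↔ ∀ F : Finset (Sym2 V), ↑F ⊆ G.edgeSet → #F < k →
      (G.deleteEdges (↑F : Set (Sym2 V))).Connected := by
  refine ⟨fun h F _ hF ↦ ⟨fun u v ↦ h u v (by simpa using hF)⟩, fun h u v s hs ↦ ?_⟩
  have hfin : (s ∩ G.edgeSet).Finite :=
    (Set.encard_lt_top_iff.1 (hs.trans (ENat.natCast_lt_top k))).inter_of_left _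
  have hF : #hfin.toFinset < k := by
    rw [← ENat.natCast_lt_natCast, ← Set.encard_coe_eq_coe_finsetCard, hfin.coe_toFinset]
    exact (Set.encard_le_encard Set.inter_subset_left).trans_lt hs
  have := (h hfin.toFinset (by simp) hF).preconnected u v
  rwa [hfin.coe_toFinset, ← deleteEdges_eq_inter_edgeSet] at this

end SimpleGraph

/-- **edge version of Menger's theorem.** A finite simple graph `G` on at
least two vertices has at least `k` pairwise edge-disjoint paths between every two
distinct vertices if and only if `G` is `k`-edge-connected. -/
theorem edge_disjoint_paths_iff_k_edge_connected
    {V : Type*} [Fintype V] [Nontrivial V] (G : SimpleGraph V) (k : ℕ) :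
    (∀ u v : V, u ≠ v → ∃ P : Fin k → G.Walk u v,
        (∀ i, (P i).IsPath) ∧
        (∀ i j, i ≠ j → ∀ e : Sym2 V, e ∈ (P i).edges → e ∉ (P j).edges)) ↔
      (∀ F : Finset (Sym2 V), ↑F ⊆ G.edgeSet → F.card < k →
        (G.deleteEdges (↑F : Set (Sym2 V))).Connected) := by
  rw [← SimpleGraph.isEdgeConnected_iff_forall_connected_deleteEdges]
  simp only [SimpleGraph.IsEdgeConnected,
    ← SimpleGraph.isEdgeReachable_iff_exists_edges_disjoint_paths]
  exact forall₂_congr fun u v ↦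
    ⟨fun h ↦ (eq_or_ne u v).elim (fun huv ↦ huv ▸ .rfl) h, fun h _ ↦ h⟩
end
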